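/- The Catalan triangle numbers C(n,k) (defined by C(0,0)=1, C(n,k)=0 for k>n or n<0, C(n,0)=C(n-1,0), C(n,k)=C(n,k-1)+C(n-1,k) for 0<k<n, C(n,n)=C(n,n-1)) satisfy the recursive relation C(n,k) = sum_{l=0}^{k} C(l,l) * C(n-l-1, k-l) for all k < n. -/

import Mathlib

/-- The Catalan triangle numbers: C(0,0)=1, C(n,k)=0 for k>n,
C(n,0)=C(n-1,0), C(n,k)=C(n,k-1)+C(n-1,k) for 0<k<n, C(n,n)=C(n,n-1). -/
def ctri : ℕ → ℕ → ℕ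
  | 0, 0 => 1
  | 0, _ + 1 => 0
  | n + 1, 0 => ctri n 0
  | n + 1, k + 1 =>
    if n + 1 < k + 1 then 0
    else if k + 1 = n + 1 then ctri (n + 1) k
    else ctri (n + 1) k + ctri n (k + 1)

/-!
`ctri n k` counts lattice paths from `(0,0)` to `(n,k)` with unit steps that never go above the
diagonal; splitting such a path at its last visit `(l,l)` to the diagonal gives the identity.
Formally, the right-hand side has the same boundary values as `ctri` and obeys the same
Pascal-type recurrence, so the two agree on `k ≤ n` by induction.
-/

open Finset

namespace Ctri

theorem zero_right : ∀ n, ctri n 0 = 1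
  | 0 => by rw [ctri]
  | n + 1 => by rw [ctri, zero_right n]

theorem eq_zero_of_lt : ∀ {n k}, n < k → ctri n k = 0
  | 0, _ + 1, _ => by rw [ctri]
  | n + 1, k + 1, h => by rw [ctri, if_pos h]

theorem succ_succ {n k : ℕ} (h : k ≤ n) :
    ctri (n + 1) (k + 1) = ctri (n + 1) k + ctri n (k + 1) := by
  rw [ctri, if_neg (by omega)]
  rcases h.eq_or_lt with rfl | hlt
  · rw [if_pos rfl, eq_zero_of_lt (Nat.lt_succ_self k), add_zero]
  · rw [if_neg (by omega)]

def lastReturnSum (n k : ℕ) : ℕ :=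
  ∑ l ∈ range (k + 1), ctri l l * ctri (n - l - 1) (k - l)

theorem lastReturnSum_zero_right (n : ℕ) : lastReturnSum n 0 = 1 := by
  simp [lastReturnSum, zero_right]

theorem lastReturnSum_self (n : ℕ) : lastReturnSum n n = ctri n n := by
  rw [lastReturnSum, sum_range_succ, Nat.sub_self, zero_right, mul_one, add_eq_right]
  refine sum_eq_zero fun l hl => ?_
  rw [eq_zero_of_lt (n := n - l - 1) (by simp at hl; omega), mul_zero]

theorem lastReturnSum_succ_succ {n k : ℕ} (h : k < n) :
    lastReturnSum (n + 1) (k + 1) = lastReturnSum (n + 1) k + lastReturnSum n (k + 1) := by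
  have last_term (m : ℕ) : ctri (m - (k + 1) - 1) (k + 1 - (k + 1)) = 1 := by
    rw [Nat.sub_self, zero_right]
  have inner_terms : ∀ l ∈ range (k + 1),
      ctri l l * ctri (n + 1 - l - 1) (k + 1 - l) =
        ctri l l * ctri (n + 1 - l - 1) (k - l) + ctri l l * ctri (n - l - 1) (k + 1 - l) := by
    intro l hl
    have hl : l ≤ k := Nat.lt_succ_iff.mp (mem_range.mp hl)
    rw [← mul_add, show n + 1 - l - 1 = n - l - 1 + 1 by omega,
      show k + 1 - l = k - l + 1 by omega, succ_succ (by omega)]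
  simp only [lastReturnSum, sum_range_succ _ (k + 1), last_term, sum_congr rfl inner_terms,
    sum_add_distrib]
  ring

theorem eq_lastReturnSum : ∀ {n k : ℕ}, k ≤ n → ctri n k = lastReturnSum n k
  | n, 0, _ => by rw [zero_right, lastReturnSum_zero_right]
  | 0, _ + 1, h => absurd h (by omega)
  | n + 1, k + 1, h => by
    obtain rfl | hlt : k = n ∨ k < n := by omega
    · exact (lastReturnSum_self _).symm
    · rw [succ_succ (by omega), lastReturnSum_succ_succ (by omega),
        eq_lastReturnSum (by omega : k ≤ n + 1), eq_lastReturnSum (by omega : k + 1 ≤ n)]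

end Ctri

/-- The Catalan triangle numbers satisfy
C(n,k) = ∑_{l=0}^{k} C(l,l) * C(n-l-1, k-l) for all k < n. -/
theorem ctri_recursion (n k : ℕ) (hk : k < n) :
    ctri n k = ∑ l ∈ Finset.range (k + 1), ctri l l * ctri (n - l - 1) (k - l) :=
  Ctri.eq_lastReturnSum hk.le
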